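/- arXiv:2008.11690 — 3 statements merged into one kernel-verified Lean document; each statement's English description precedes it below -/
import Mathlib

section
/- The 2-form ω = 𝒱_{abc}(ξ) dξ^a ∧ dρ^{bc}, where 𝒱_{a₁…a_k}(ξ) = (1/(n−k)!) ε_{a₁…a_k b₁…b_{n−k}} ξ^{b₁}⋯ξ^{b_{n−k}}, is closed: dω = 0. -/
open scoped BigOperators

/-- The Levi-Civita symbol `ε_{g(0) … g(n-1)}`: the sign of `g` if `g` is a
permutation of `Fin n`, and `0` otherwise. -/
noncomputable def eps {n : ℕ} (g : Fin n → Fin n) : ℝ :=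
  ∑ σ : Equiv.Perm (Fin n),
    if (σ : Fin n → Fin n) = g then ((Equiv.Perm.sign σ : ℤ) : ℝ) else 0

/-- The index tuple `(a, b, c, f 0, …, f (n-4))` as a function `Fin n → Fin n`. -/
def cat3 {n : ℕ} (a b c : Fin n) (f : Fin (n - 3) → Fin n) : Fin n → Fin n :=
  fun i =>
    if i.val = 0 then a
    else if i.val = 1 then b
    else if i.val = 2 then c
    else if h : i.val - 3 < n - 3 then f ⟨i.val - 3, h⟩ else a

/-- `𝒱_{abc}(ξ) = (1/(n-3)!) ε_{abc b₁…b_{n-3}} ξ^{b₁} ⋯ ξ^{b_{n-3}}`. -/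
noncomputable def Vthree {n : ℕ} {A : Type*} [Ring A] [Algebra ℝ A]
    (ξ : Fin n → A) (a b c : Fin n) : A :=
  ((Nat.factorial (n - 3) : ℝ))⁻¹ •
    ∑ f : Fin (n - 3) → Fin n,
      eps (cat3 a b c f) • (List.ofFn fun j => ξ (f j)).prod

/-! By the graded Leibniz rule, `d(𝒱_{abc} dξ^a dρ^{bc})` is a sum over the slot `j` of the
differentiated `ξ^{b_j}` of `ε_{abc b₁…b_{n-3}} ξ^{b₁}⋯dξ^{b_j}⋯ξ^{b_{n-3}} dξ^a dρ^{bc}`.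
For fixed `b, c, j` the even factor `dξ^{b_j} dξ^a` is symmetric under `a ↔ b_j` while `ε` is
antisymmetric, so the involution exchanging `a` and `b_j` pairs off the terms with opposite
signs: this is the identity `ε_{[abcd} ξ^{e]} = 0`. -/

open Function Equiv

lemma Fintype.sum_eq_zero_of_apply_perm_eq_neg {ι M : Type*} [Fintype ι] [AddCommGroup M]
    [IsAddTorsionFree M] (e : Perm ι) {s : ι → M} (hs : ∀ p, s (e p) = -s p) :
    ∑ p, s p = 0 := by
  have h := Equiv.sum_comp e s
  rw [Fintype.sum_congr _ _ hs, Finset.sum_neg_distrib] at h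
  exact neg_eq_self.mp h

lemma eps_comp_swap {n : ℕ} (g : Fin n → Fin n) {i k : Fin n} (hik : i ≠ k) :
    eps (g ∘ swap i k) = -eps g := by
  unfold eps
  rw [← Equiv.sum_comp (Equiv.mulRight (swap i k)), ← Finset.sum_neg_distrib]
  refine Finset.sum_congr rfl fun σ _ => ?_
  have hσ : ((σ * swap i k : Perm (Fin n)) : Fin n → Fin n) = g ∘ swap i k ↔ ⇑σ = g :=
    (swap i k).surjective.injective_comp_right.eq_iff
  simp only [coe_mulRight, hσ, Perm.sign_mul, Perm.sign_swap hik]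
  split_ifs <;> simp

lemma cat3_update_eq_comp_swap {n : ℕ} (a b c : Fin n) (f : Fin (n - 3) → Fin n)
    (j : Fin (n - 3)) :
    cat3 (f j) b c (update f j a)
      = cat3 a b c f ∘ swap ⟨0, by have := j.isLt; omega⟩ ⟨j + 3, by have := j.isLt; omega⟩ := by
  funext ⟨i, hi⟩
  simp only [cat3, comp_apply, swap_apply_def, Fin.ext_iff, update_apply]
  split_ifs <;> simp_all <;> omega

lemma map_prod_ofFn_mul_of_map_eq_zero {R A : Type*} [CommRing R] [Ring A] [Algebra R A]
    (d : A →ₗ[R] A) {m : ℕ} (g Dg : Fin m → A) (hcomm : ∀ i j, Commute (Dg i) (g j))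
    (hd : ∀ j x, d (g j * x) = Dg j * x - g j * d x) {x : A} (hx : d x = 0) :
    d ((List.ofFn g).prod * x)
      = ∑ j : Fin m, (-1 : R) ^ (j : ℕ) • (Dg j * ((List.ofFn (update g j 1)).prod * x)) := by
  induction m with
  | zero => simp [hx]
  | succ m ih =>
    have htail_zero : (fun i : Fin m => update g 0 1 i.succ) = fun i => g i.succ :=
      Fin.tail_update_zero g 1
    have htail_succ (j : Fin m) :
        (fun i : Fin m => update g j.succ 1 i.succ) = update (fun i => g i.succ) j 1 :=
      Fin.tail_update_succ g j 1
    rw [List.ofFn_succ, List.prod_cons, mul_assoc, hd,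
      ih (fun i => g i.succ) (fun i => Dg i.succ) (fun _ _ => hcomm _ _) (fun _ => hd _),
      Fin.sum_univ_succ]
    simp only [List.ofFn_succ, htail_zero, htail_succ, List.prod_cons,
      update_self, update_of_ne (Fin.succ_ne_zero _).symm, one_mul, Fin.val_zero, pow_zero,
      one_smul, Fin.val_succ, pow_succ, mul_neg_one, neg_smul, Finset.sum_neg_distrib,
      Finset.mul_sum, mul_smul_comm, sub_eq_add_neg, mul_assoc]
    congr 2
    refine Finset.sum_congr rfl fun j _ => ?_
    rw [← mul_assoc (g 0), ← (hcomm _ _).eq, mul_assoc]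

lemma sum_eps_cat3_smul_eq_zero {n : ℕ} {M : Type*} [AddCommGroup M] [Module ℝ M]
    (b c : Fin n) (j : Fin (n - 3)) (F : Fin n → (Fin (n - 3) → Fin n) → M)
    (hF : ∀ a f, F (f j) (update f j a) = F a f) :
    ∑ a, ∑ f, eps (cat3 a b c f) • F a f = 0 := by
  have : IsAddTorsionFree M := .of_isTorsionFree ℝ M
  have hinv : Involutive fun p : Fin n × (Fin (n - 3) → Fin n) => (p.2 j, update p.2 j p.1) := by
    rintro ⟨a, f⟩
    simp
  rw [← Fintype.sum_prod_type']
  refine Fintype.sum_eq_zero_of_apply_perm_eq_neg hinv.toPerm fun ⟨a, f⟩ => ?_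
  have hne : (⟨0, by have := j.isLt; omega⟩ : Fin n) ≠ ⟨j + 3, by have := j.isLt; omega⟩ := by
    simp [Fin.ext_iff]
  simp only [Involutive.coe_toPerm, hF, cat3_update_eq_comp_swap, eps_comp_swap _ hne, neg_smul]

lemma map_Vthree_mul {n : ℕ} {A : Type*} [Ring A] [Algebra ℝ A] (d : A →ₗ[ℝ] A)
    (ξ Dξ : Fin n → A) (hcomm : ∀ a b, Commute (Dξ a) (ξ b))
    (hd : ∀ a x, d (ξ a * x) = Dξ a * x - ξ a * d x) (a b c : Fin n) {x : A} (hx : d x = 0) :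
    d (Vthree ξ a b c * x) = ((Nat.factorial (n - 3) : ℝ))⁻¹ • ∑ j : Fin (n - 3), ∑ f,
      eps (cat3 a b c f) • (-1 : ℝ) ^ (j : ℕ) •
        (Dξ (f j) * ((List.ofFn (update (ξ ∘ f) j 1)).prod * x)) := by
  simp only [Vthree, smul_mul_assoc, Finset.sum_mul, map_smul, map_sum]
  rw [Finset.sum_comm]
  congr 1
  refine Finset.sum_congr rfl fun f _ => ?_
  rw [← Finset.smul_sum]
  exact congrArg _ (map_prod_ofFn_mul_of_map_eq_zero d (ξ ∘ f) (Dξ ∘ f)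
    (fun _ _ => hcomm _ _) (fun _ => hd _) hx)

/-- `A` models the de Rham complex of the graded manifold: it contains the odd coordinates `ξ` and
their even, hence central, differentials `Dξ`, `Dρ`, and the odd derivation `d` is given by its
graded Leibniz rule on left multiples of `ξ` and `Dξ`. -/
theorem presymplectic_form_closed_general
    (n : ℕ) (A : Type*) [Ring A] [Algebra ℝ A]
    (ξ : Fin n → A) (Dξ : Fin n → A) (Dρ : Fin n → Fin n → A)
    (hDξc : ∀ a x, Dξ a * x = x * Dξ a)
    (d : A →ₗ[ℝ] A)
    (hdDρ : ∀ a b, d (Dρ a b) = 0)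
    (hdLξ : ∀ a x, d (ξ a * x) = Dξ a * x - ξ a * d x)
    (hdLDξ : ∀ a x, d (Dξ a * x) = Dξ a * d x) :
    d (∑ a, ∑ b, ∑ c, Vthree ξ a b c * (Dξ a * Dρ b c)) = 0 := by
  have hclosed (a b c : Fin n) : d (Dξ a * Dρ b c) = 0 := by rw [hdLDξ, hdDρ, mul_zero]
  have hswap (u v : Fin n) (y z : A) : Dξ u * (y * (Dξ v * z)) = Dξ v * (y * (Dξ u * z)) := by
    have hmid (w : Fin n) : y * (Dξ w * z) = Dξ w * (y * z) := by
      rw [← mul_assoc, ← hDξc, mul_assoc]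
    rw [hmid, hmid, ← mul_assoc (Dξ u), ← mul_assoc (Dξ v), hDξc u (Dξ v)]
  simp only [map_sum, map_Vthree_mul d ξ Dξ (fun a b => hDξc a (ξ b)) hdLξ _ _ _ (hclosed _ _ _)]
  rw [Finset.sum_comm]
  refine Finset.sum_eq_zero fun b _ => ?_
  rw [Finset.sum_comm]
  refine Finset.sum_eq_zero fun c _ => ?_
  rw [← Finset.smul_sum, Finset.sum_comm]
  refine (smul_eq_zero_of_right _ <| Finset.sum_eq_zero fun j _ => ?_)
  refine sum_eps_cat3_smul_eq_zero b c j _ fun a f => ?_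
  rw [update_self, comp_update, update_idem, hswap]

/-- the 2-form `ω = 𝒱_{abc}(ξ) dξ^a ∧ dρ^{bc}` on the graded
manifold with odd coordinates `ξ^a`, `ρ^{ab} = -ρ^{ba}` is closed: `dω = 0`.
Here the de Rham complex is modelled by any `ℝ`-algebra `A` generated by the odd
coordinates `ξ, ρ` and their (even, hence central) differentials `Dξ, Dρ`, and
`d` is the odd derivation with `d ξ = Dξ`, `d ρ = Dρ`, `d Dξ = 0 = d Dρ`. -/
theorem presymplectic_form_closed
    (n : ℕ) (hn : 3 ≤ n) (A : Type*) [Ring A] [Algebra ℝ A]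
    (ξ : Fin n → A) (ρ : Fin n → Fin n → A)
    (Dξ : Fin n → A) (Dρ : Fin n → Fin n → A)
    (hρa : ∀ a b, ρ a b = - ρ b a)
    (hDρa : ∀ a b, Dρ a b = - Dρ b a)
    (hξξ : ∀ a b, ξ a * ξ b = - (ξ b * ξ a))
    (hξρ : ∀ a b c, ξ a * ρ b c = - (ρ b c * ξ a))
    (hρρ : ∀ a b c d, ρ a b * ρ c d = - (ρ c d * ρ a b))
    (hDξc : ∀ a x, Dξ a * x = x * Dξ a)
    (hDρc : ∀ a b x, Dρ a b * x = x * Dρ a b)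
    (d : A →ₗ[ℝ] A)
    (hdξ : ∀ a, d (ξ a) = Dξ a)
    (hdρ : ∀ a b, d (ρ a b) = Dρ a b)
    (hdDξ : ∀ a, d (Dξ a) = 0)
    (hdDρ : ∀ a b, d (Dρ a b) = 0)
    (hdLξ : ∀ a x, d (ξ a * x) = Dξ a * x - ξ a * d x)
    (hdLρ : ∀ a b x, d (ρ a b * x) = Dρ a b * x - ρ a b * d x)
    (hdLDξ : ∀ a x, d (Dξ a * x) = Dξ a * d x)
    (hdLDρ : ∀ a b x, d (Dρ a b * x) = Dρ a b * d x) :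
    d (∑ a, ∑ b, ∑ c, Vthree ξ a b c * (Dξ a * Dρ b c)) = 0 :=
  presymplectic_form_closed_general n A ξ Dξ Dρ hDξc d hdDρ hdLξ hdLDξ
end

section
/- The 2-form ω = 𝒱_{abc}(ξ) dξ^a ∧ dρ^{bc} is exact: ω = d χ where χ = 𝒱_{ab}(ξ) dρ^{ab}, with 𝒱_{ab}(ξ) = (1/(n−2)!) ε_{a b c₁…c_{n−2}} ξ^{c₁}⋯ξ^{c_{n−2}}. -/
open scoped BigOperators

def cat2 {n : ℕ} (a b : Fin n) (f : Fin (n - 2) → Fin n) : Fin n → Fin n :=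
  fun i =>
    if i.val = 0 then a
    else if i.val = 1 then b
    else if h : i.val - 2 < n - 2 then f ⟨i.val - 2, h⟩ else a

/-- `𝒱_{ab}(ξ) = (1/(n-2)!) ε_{ab c₁…c_{n-2}} ξ^{c₁} ⋯ ξ^{c_{n-2}}`. -/
noncomputable def Vtwo {n : ℕ} {A : Type*} [Ring A] [Algebra ℝ A]
    (ξ : Fin n → A) (a b : Fin n) : A :=
  ((Nat.factorial (n - 2) : ℝ))⁻¹ •
    ∑ f : Fin (n - 2) → Fin n,
      eps (cat2 a b f) • (List.ofFn fun j => ξ (f j)).prod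

/-! Applying the graded Leibniz rule to the monomial `ξ^{c₁} ⋯ ξ^{c_{n-2}}` of `𝒱_{ab}`
gives, for each position `j`, the sign `(-1)^j` times `dξ^{c_j}` and the monomial with its
`j`-th factor removed (`dρ^{ab}` is closed and `dξ` is even, so neither contributes).
Moving `c_j` to the front of the index list of `ε_{a b c₁ …}` is a cycle of sign `(-1)^j`,
which cancels that sign. Hence all `n - 2` positions contribute the same sum
`ε_{c a b g₁ …} dξ^c ξ^{g₁} ⋯`, and the factor `n - 2` turns `1/(n-2)!` into `1/(n-3)!`. -/

open Finset

lemma eps_comp_perm {n : ℕ} (g : Fin n → Fin n) (τ : Equiv.Perm (Fin n)) :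
    eps (g ∘ τ) = (Equiv.Perm.sign τ : ℝ) * eps g := by
  unfold eps
  rw [← Equiv.sum_comp (Equiv.mulRight τ), mul_sum]
  refine sum_congr rfl fun σ _ => ?_
  simp only [Equiv.coe_mulRight, Equiv.Perm.coe_mul, τ.surjective.injective_comp_right.eq_iff,
    map_mul]
  split_ifs <;> push_cast <;> ring

section
variable {k : ℕ}

lemma cat2_eq_cons (a b : Fin (k + 3)) (f : Fin (k + 1) → Fin (k + 3)) :
    cat2 a b f = Fin.cons a (Fin.cons b f) := by
  funext i
  refine Fin.cases rfl (fun i => Fin.cases rfl (fun i => ?_) i) i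
  simp [cat2, Fin.is_le]

lemma cat3_eq_cons (a b c : Fin (k + 3)) (g : Fin k → Fin (k + 3)) :
    cat3 a b c g = Fin.cons a (Fin.cons b (Fin.cons c g)) := by
  funext i
  refine Fin.cases rfl (fun i => Fin.cases rfl (fun i => Fin.cases rfl (fun i => ?_) i) i) i
  simp [cat3]

variable {A : Type*} [Ring A] [Algebra ℝ A]

-- `k + 3 - 2` and `k + 3 - 3` reduce to `k + 1` and `k`, which makes these restatements `rfl`.
lemma Vtwo_eq_sum_cons (ξ : Fin (k + 3) → A) (a b : Fin (k + 3)) :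
    Vtwo ξ a b = ((k + 1).factorial : ℝ)⁻¹ • ∑ f : Fin (k + 1) → Fin (k + 3),
      eps (Fin.cons a (Fin.cons b f) : Fin (k + 3) → Fin (k + 3)) •
        (List.ofFn fun i => ξ (f i)).prod := by
  simp only [← cat2_eq_cons]
  rfl

lemma Vthree_eq_sum_cons (ξ : Fin (k + 3) → A) (a b c : Fin (k + 3)) :
    Vthree ξ a b c = (k.factorial : ℝ)⁻¹ • ∑ g : Fin k → Fin (k + 3),
      eps (Fin.cons a (Fin.cons b (Fin.cons c g)) : Fin (k + 3) → Fin (k + 3)) •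
        (List.ofFn fun i => ξ (g i)).prod := by
  simp only [← cat3_eq_cons]
  rfl

lemma cons_cons_cons_removeNth (a b : Fin (k + 3)) (f : Fin (k + 1) → Fin (k + 3))
    (j : Fin (k + 1)) :
    (Fin.cons (f j) (Fin.cons a (Fin.cons b (j.removeNth f))) : Fin (k + 3) → Fin (k + 3)) =
      Fin.cons a (Fin.cons b f) ∘ (j.succ.succ.cycleRange).symm := by
  rw [← Fin.cons_removeNth_eq_comp_cycleRange_symm]
  congr 1
  funext i
  refine Fin.cases rfl (fun i => Fin.cases rfl (fun i => ?_) i) i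
  simp [Fin.removeNth]

lemma neg_one_pow_mul_eps_cons (a b : Fin (k + 3)) (f : Fin (k + 1) → Fin (k + 3))
    (j : Fin (k + 1)) :
    (-1) ^ (j : ℕ) * eps (Fin.cons a (Fin.cons b f) : Fin (k + 3) → Fin (k + 3)) =
      eps (Fin.cons (f j) (Fin.cons a (Fin.cons b (j.removeNth f))) :
        Fin (k + 3) → Fin (k + 3)) := by
  rw [cons_cons_cons_removeNth, eps_comp_perm, Equiv.Perm.sign_symm, Fin.sign_cycleRange]
  simp [pow_add]

lemma sum_eps_cons_smul_sum_removeNth {M : Type*} [AddCommGroup M] [Module ℝ M]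
    (a b : Fin (k + 3)) (Φ : Fin (k + 3) → (Fin k → Fin (k + 3)) → M) :
    ∑ f : Fin (k + 1) → Fin (k + 3),
      eps (Fin.cons a (Fin.cons b f) : Fin (k + 3) → Fin (k + 3)) •
        ∑ j : Fin (k + 1), (-1 : ℝ) ^ (j : ℕ) • Φ (f j) (j.removeNth f) =
      (k + 1) • ∑ c, ∑ g : Fin k → Fin (k + 3),
        eps (Fin.cons c (Fin.cons a (Fin.cons b g)) : Fin (k + 3) → Fin (k + 3)) • Φ c g := by
  calc _ = ∑ j : Fin (k + 1), ∑ f : Fin (k + 1) → Fin (k + 3),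
        eps (Fin.cons (f j) (Fin.cons a (Fin.cons b (j.removeNth f))) :
          Fin (k + 3) → Fin (k + 3)) •
          Φ (f j) (j.removeNth f) := by
        simp only [smul_sum, smul_smul, mul_comm _ ((-1 : ℝ) ^ _), neg_one_pow_mul_eps_cons]
        exact sum_comm
    _ = ∑ _j : Fin (k + 1), ∑ c, ∑ g : Fin k → Fin (k + 3),
        eps (Fin.cons c (Fin.cons a (Fin.cons b g)) : Fin (k + 3) → Fin (k + 3)) • Φ c g := by
        refine sum_congr rfl fun j _ => ?_
        rw [← Fintype.sum_prod_type']
        exact Fintype.sum_equiv (Fin.insertNthEquiv _ j).symm _ _ fun _ => rfl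
    _ = _ := by rw [sum_const, card_univ, Fintype.card_fin]

end

lemma leibniz_ofFn_prod_mul {R A ι : Type*} [CommRing R] [Ring A] [Algebra R A]
    (x dx : ι → A) (d : A → A) (hdx : ∀ i z, dx i * z = z * dx i)
    (hd : ∀ i z, d (x i * z) = dx i * z - x i * d z) {y : A} (hy : d y = 0) :
    ∀ {m : ℕ} (f : Fin (m + 1) → ι), d ((List.ofFn fun i => x (f i)).prod * y) =
      ∑ j : Fin (m + 1), (-1 : R) ^ (j : ℕ) •
        (dx (f j) * ((List.ofFn fun i => x (j.removeNth f i)).prod * y))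
  | 0, _ => by simp [hd, hy]
  | m + 1, f => by
    have hsucc : ∀ j : Fin (m + 1),
        j.succ.removeNth f = Fin.cons (f 0) (j.removeNth fun i => f i.succ) := by
      intro j
      funext i
      refine Fin.cases rfl (fun i => ?_) i
      simp [Fin.removeNth]
    rw [List.ofFn_succ, List.prod_cons, mul_assoc, hd,
      leibniz_ofFn_prod_mul (R := R) x dx d hdx hd hy, mul_sum, sub_eq_add_neg, ← sum_neg_distrib,
      Fin.sum_univ_succ (n := m + 1)]
    congr 1
    · simp [Fin.removeNth]
    refine sum_congr rfl fun j _ => ?_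
    rw [hsucc, List.ofFn_succ, List.prod_cons]
    simp only [Algebra.mul_smul_comm, Fin.val_succ, pow_succ, mul_neg, mul_one, Fin.cons_zero,
      Fin.cons_succ, mul_assoc, neg_smul, neg_inj]
    rw [← mul_assoc, ← hdx, mul_assoc]

lemma map_Vtwo_mul {k : ℕ} {A : Type*} [Ring A] [Algebra ℝ A] (ξ Dξ : Fin (k + 3) → A)
    (d : A →ₗ[ℝ] A) (hDξc : ∀ a x, Dξ a * x = x * Dξ a)
    (hdLξ : ∀ a x, d (ξ a * x) = Dξ a * x - ξ a * d x) (a b : Fin (k + 3)) {y : A}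
    (hy : d y = 0) :
    d (Vtwo ξ a b * y) = ∑ c, Vthree ξ c a b * (Dξ c * y) := by
  have hfactorial : ((k + 1).factorial : ℝ)⁻¹ * (k + 1 : ℕ) = (k.factorial : ℝ)⁻¹ := by
    rw [Nat.factorial_succ, Nat.cast_mul, mul_inv, mul_comm, ← mul_assoc,
      mul_inv_cancel₀ (by positivity), one_mul]
  calc d (Vtwo ξ a b * y)
      = ((k + 1).factorial : ℝ)⁻¹ • ∑ f : Fin (k + 1) → Fin (k + 3),
          eps (Fin.cons a (Fin.cons b f) : Fin (k + 3) → Fin (k + 3)) •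
            d ((List.ofFn fun i => ξ (f i)).prod * y) := by
        simp only [Vtwo_eq_sum_cons, smul_mul_assoc, sum_mul, map_smul, map_sum]
    _ = ((k + 1).factorial : ℝ)⁻¹ • ((k + 1) • ∑ c, ∑ g : Fin k → Fin (k + 3),
          eps (Fin.cons c (Fin.cons a (Fin.cons b g)) : Fin (k + 3) → Fin (k + 3)) •
            (Dξ c * ((List.ofFn fun i => ξ (g i)).prod * y))) := by
        simp only [leibniz_ofFn_prod_mul (R := ℝ) ξ Dξ d hDξc hdLξ hy]
        rw [sum_eps_cons_smul_sum_removeNth a b fun c g =>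
          Dξ c * ((List.ofFn fun i => ξ (g i)).prod * y)]
    _ = ∑ c, Vthree ξ c a b * (Dξ c * y) := by
        rw [← Nat.cast_smul_eq_nsmul ℝ, smul_smul, hfactorial, smul_sum]
        refine sum_congr rfl fun c _ => ?_
        simp only [Vthree_eq_sum_cons, smul_mul_assoc, sum_mul, ← mul_assoc, hDξc c]

theorem presymplectic_form_exact_general
    (n : ℕ) (hn : 3 ≤ n) (A : Type*) [Ring A] [Algebra ℝ A]
    (ξ : Fin n → A)
    (Dξ : Fin n → A) (Dρ : Fin n → Fin n → A)
    (hDξc : ∀ a x, Dξ a * x = x * Dξ a)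
    (d : A →ₗ[ℝ] A)
    (hdDρ : ∀ a b, d (Dρ a b) = 0)
    (hdLξ : ∀ a x, d (ξ a * x) = Dξ a * x - ξ a * d x) :
    d (∑ a, ∑ b, Vtwo ξ a b * Dρ a b)
      = ∑ a, ∑ b, ∑ c, Vthree ξ a b c * (Dξ a * Dρ b c) := by
  obtain ⟨k, rfl⟩ : ∃ k, n = k + 3 := ⟨n - 3, by omega⟩
  simp only [map_sum, map_Vtwo_mul ξ Dξ d hDξc hdLξ _ _ (hdDρ _ _)]
  exact (sum_congr rfl fun _ _ => sum_comm).trans sum_comm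

/-- the 2-form `ω = 𝒱_{abc}(ξ) dξ^a ∧ dρ^{bc}` is exact:
`ω = dχ` for the presymplectic potential `χ = 𝒱_{ab}(ξ) dρ^{ab}`.
The graded de Rham complex of `g[1]` is modelled as in Statement 2. -/
theorem presymplectic_form_exact
    (n : ℕ) (hn : 3 ≤ n) (A : Type*) [Ring A] [Algebra ℝ A]
    (ξ : Fin n → A) (ρ : Fin n → Fin n → A)
    (Dξ : Fin n → A) (Dρ : Fin n → Fin n → A)
    (hρa : ∀ a b, ρ a b = - ρ b a)
    (hDρa : ∀ a b, Dρ a b = - Dρ b a)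
    (hξξ : ∀ a b, ξ a * ξ b = - (ξ b * ξ a))
    (hξρ : ∀ a b c, ξ a * ρ b c = - (ρ b c * ξ a))
    (hρρ : ∀ a b c d, ρ a b * ρ c d = - (ρ c d * ρ a b))
    (hDξc : ∀ a x, Dξ a * x = x * Dξ a)
    (hDρc : ∀ a b x, Dρ a b * x = x * Dρ a b)
    (d : A →ₗ[ℝ] A)
    (hdξ : ∀ a, d (ξ a) = Dξ a)
    (hdρ : ∀ a b, d (ρ a b) = Dρ a b)
    (hdDξ : ∀ a, d (Dξ a) = 0)
    (hdDρ : ∀ a b, d (Dρ a b) = 0)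
    (hdLξ : ∀ a x, d (ξ a * x) = Dξ a * x - ξ a * d x)
    (hdLρ : ∀ a b x, d (ρ a b * x) = Dρ a b * x - ρ a b * d x)
    (hdLDξ : ∀ a x, d (Dξ a * x) = Dξ a * d x)
    (hdLDρ : ∀ a b x, d (Dρ a b * x) = Dρ a b * d x) :
    d (∑ a, ∑ b, Vtwo ξ a b * Dρ a b)
      = ∑ a, ∑ b, ∑ c, Vthree ξ a b c * (Dξ a * Dρ b c) :=
  presymplectic_form_exact_general n hn A ξ Dξ Dρ hDξc d hdDρ hdLξ
end

section
/- The vector fields X⁴_a, X³_{ab}, Y⁴_{ab}, Y³_{abc}, Y²_{abcd} (as in the previous statement, n = 4) pairwise commute: the graded commutator of any two of them vanishes. -/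
set_option linter.unusedSectionVars false
set_option maxHeartbeats 1000000


open scoped BigOperators

section

variable {A : Type*} [Ring A] [Algebra ℝ A]

noncomputable def xiFour (ξ : Fin 4 → A) : A :=
  ((24 : ℝ))⁻¹ • ∑ a, ∑ b, ∑ c, ∑ d,
    eps ![a, b, c, d] • (ξ a * ξ b * ξ c * ξ d)

noncomputable def xiThree (ξ : Fin 4 → A) (e : Fin 4) : A :=
  ((6 : ℝ))⁻¹ • ∑ b, ∑ c, ∑ d, eps ![e, b, c, d] • (ξ b * ξ c * ξ d)

noncomputable def xiTwo (ξ : Fin 4 → A) (e f : Fin 4) : A :=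
  ((2 : ℝ))⁻¹ • ∑ c, ∑ d, eps ![e, f, c, d] • (ξ c * ξ d)

/-- The antisymmetrized component of `v ∂/∂ρ^{z w}` along `∂/∂ρ^{b c}`. -/
noncomputable def dRho (v : A) (z w b c : Fin 4) : A :=
  (if b = z ∧ c = w then v else 0) - (if b = w ∧ c = z then v else 0)

/-- `D` is a derivation of parity `s` (`s = 1`: even, `s = -1`: odd) with
components `Cξ` along `∂/∂ξ` and `Cρ` along `∂/∂ρ`. -/
def IsCompVF (ξ : Fin 4 → A) (ρ : Fin 4 → Fin 4 → A) (D : A →ₗ[ℝ] A)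
    (s : ℝ) (Cξ : Fin 4 → A) (Cρ : Fin 4 → Fin 4 → A) : Prop :=
  (∀ a, D (ξ a) = Cξ a) ∧ (∀ a b, D (ρ a b) = Cρ a b) ∧
  (∀ a x, D (ξ a * x) = Cξ a * x + s • (ξ a * D x)) ∧
  (∀ a b x, D (ρ a b * x) = Cρ a b * x + s • (ρ a b * D x))

/-- The five families `X⁴`, `X³`, `Y⁴`, `Y³`, `Y²` of vector fields, given by
their parity and components. -/
def FamSpec (ξ : Fin 4 → A) (s : ℝ) (Cξ : Fin 4 → A)
    (Cρ : Fin 4 → Fin 4 → A) : Prop :=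
  (∃ e, s = -1 ∧ Cξ = (fun b => if b = e then xiFour ξ else 0) ∧ Cρ = 0) ∨
  (∃ e f, s = 1 ∧ Cξ = (fun b => (if b = f then xiThree ξ e else 0)
      + (if b = e then xiThree ξ f else 0)) ∧ Cρ = 0) ∨
  (∃ e f, s = -1 ∧ Cξ = 0 ∧ Cρ = fun b c => dRho (xiFour ξ) e f b c) ∨
  (∃ e f g, s = 1 ∧ Cξ = 0 ∧ Cρ = fun b c =>
      dRho (xiThree ξ e) f g b c + dRho (xiThree ξ f) e g b c) ∨
  (∃ e f g h, s = -1 ∧ Cξ = 0 ∧ Cρ = fun b c =>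
      dRho (xiTwo ξ e f) g h b c + dRho (xiTwo ξ g f) e h b c
        + dRho (xiTwo ξ e h) g f b c + dRho (xiTwo ξ g h) e f b c)

end

lemma eps_apply_perm (σ : Equiv.Perm (Fin 4)) :
    eps ⇑σ = ((Equiv.Perm.sign σ : ℤ) : ℝ) := by
  unfold eps
  rw [Finset.sum_eq_single σ]
  · simp
  · intro τ _ hτ
    exact if_neg fun h => hτ (Equiv.coe_fn_injective h)
  · simp

lemma eps_zero_of_not_inj {n : ℕ} {g : Fin n → Fin n} (h : ¬Function.Injective g) :
    eps g = 0 :=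
  Finset.sum_eq_zero fun σ _ => if_neg fun hh => h (by rw [← hh]; exact σ.injective)

lemma eps_dup {a b c d : Fin 4}
    (h : a = b ∨ a = c ∨ a = d ∨ b = c ∨ b = d ∨ c = d) :
    eps ![a,b,c,d] = 0 := by
  apply eps_zero_of_not_inj
  intro hinj
  rcases h with h|h|h|h|h|h
  · exact absurd (hinj (a₁ := 0) (a₂ := 1) (by simp [h])) (by decide)
  · exact absurd (hinj (a₁ := 0) (a₂ := 2) (by simp [h])) (by decide)
  · exact absurd (hinj (a₁ := 0) (a₂ := 3) (by simp [h])) (by decide)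
  · exact absurd (hinj (a₁ := 1) (a₂ := 2) (by simp [h])) (by decide)
  · exact absurd (hinj (a₁ := 1) (a₂ := 3) (by simp [h])) (by decide)
  · exact absurd (hinj (a₁ := 2) (a₂ := 3) (by simp [h])) (by decide)

section Mono
variable {A : Type*} [Ring A] [Algebra ℝ A] (ξ : Fin 4 → A)
variable (hξξ : ∀ a b, ξ a * ξ b = -(ξ b * ξ a))
include hξξ

lemma xi_sq (i : Fin 4) : ξ i * ξ i = 0 := by
  have h2 : (2:ℝ) • (ξ i * ξ i) = 0 := by
    rw [two_smul]
    exact add_eq_zero_iff_eq_neg.mpr (hξξ i i)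
  have := congrArg (fun x => ((2:ℝ))⁻¹ • x) h2
  simpa [smul_smul] using this

lemma swap_r (i j : Fin 4) (x : A) : ξ i * (ξ j * x) = -(ξ j * (ξ i * x)) := by
  rw [← mul_assoc, hξξ, neg_mul, mul_assoc]

lemma sq_r (i : Fin 4) (x : A) : ξ i * (ξ i * x) = 0 := by
  rw [← mul_assoc, xi_sq ξ hξξ, zero_mul]

lemma K3 (i j : Fin 4) (x : A) : ξ i * (ξ j * (ξ i * x)) = 0 := by
  rw [swap_r ξ hξξ j i x, mul_neg, sq_r ξ hξξ, neg_zero]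

lemma K4 (i j k : Fin 4) (x : A) : ξ i * (ξ j * (ξ k * (ξ i * x))) = 0 := by
  rw [swap_r ξ hξξ k i x, mul_neg, mul_neg, K3 ξ hξξ, neg_zero]

lemma K5 (i j k l : Fin 4) (x : A) : ξ i * (ξ j * (ξ k * (ξ l * (ξ i * x)))) = 0 := by
  rw [swap_r ξ hξξ l i x, mul_neg, mul_neg, mul_neg, K4 ξ hξξ, neg_zero]

lemma mono5x (a b c d e : Fin 4) (x : A) :
    ξ a * (ξ b * (ξ c * (ξ d * (ξ e * x)))) = 0 := by
  by_cases h12 : a = b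
  · subst h12; exact sq_r ξ hξξ _ _
  by_cases h13 : a = c
  · subst h13; exact K3 ξ hξξ _ _ _
  by_cases h14 : a = d
  · subst h14; exact K4 ξ hξξ _ _ _ _
  by_cases h15 : a = e
  · subst h15; exact K5 ξ hξξ _ _ _ _ _
  by_cases h23 : b = c
  · subst h23; rw [sq_r ξ hξξ, mul_zero]
  by_cases h24 : b = d
  · subst h24; rw [K3 ξ hξξ, mul_zero]
  by_cases h25 : b = e
  · subst h25; rw [K4 ξ hξξ, mul_zero]
  by_cases h34 : c = d
  · subst h34; rw [sq_r ξ hξξ, mul_zero, mul_zero]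
  by_cases h35 : c = e
  · subst h35; rw [K3 ξ hξξ, mul_zero, mul_zero]
  by_cases h45 : d = e
  · subst h45; rw [sq_r ξ hξξ, mul_zero, mul_zero, mul_zero]
  exfalso
  have hinj : Function.Injective (![a,b,c,d,e] : Fin 5 → Fin 4) := by
    intro i j hij
    fin_cases i <;> fin_cases j <;> simp_all
  have := Fintype.card_le_of_injective _ hinj
  simp at this

lemma mono5r (a b c d e : Fin 4) : ξ a * (ξ b * (ξ c * (ξ d * ξ e))) = 0 := by
  simpa using mono5x ξ hξξ a b c d e 1

end Mono

section HKill
variable {A : Type*} [Ring A] [Algebra ℝ A] (ξ : Fin 4 → A)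
variable (hξξ : ∀ a b, ξ a * ξ b = -(ξ b * ξ a))
include hξξ

lemma xiFour_mul (i : Fin 4) (x : A) : xiFour ξ * (ξ i * x) = 0 := by
  simp [xiFour, Finset.sum_mul, smul_mul_assoc, mul_assoc, mono5x ξ hξξ]

lemma xiFour_mul' (i : Fin 4) : xiFour ξ * ξ i = 0 := by
  simpa using xiFour_mul ξ hξξ i 1

lemma mul_xiFour (i : Fin 4) : ξ i * xiFour ξ = 0 := by
  simp [xiFour, Finset.mul_sum, mul_smul_comm, mul_assoc, mono5r ξ hξξ]

lemma xiThree_mul2 (e i j : Fin 4) (x : A) :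
    xiThree ξ e * (ξ i * (ξ j * x)) = 0 := by
  simp [xiThree, Finset.sum_mul, smul_mul_assoc, mul_assoc, mono5x ξ hξξ]

lemma xiThree_mul2' (e i j : Fin 4) : xiThree ξ e * (ξ i * ξ j) = 0 := by
  simpa using xiThree_mul2 ξ hξξ e i j 1

lemma mul_xiThree_mul (j e k : Fin 4) : ξ j * (xiThree ξ e * ξ k) = 0 := by
  simp [xiThree, Finset.sum_mul, Finset.mul_sum, smul_mul_assoc, mul_smul_comm,
    mul_assoc, mono5r ξ hξξ]

lemma swap3 (c x y z : Fin 4) :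
    ξ c * (ξ x * (ξ y * ξ z)) = -(ξ x * (ξ y * (ξ z * ξ c))) := by
  rw [swap_r ξ hξξ c x, swap_r ξ hξξ c y, hξξ c z]
  simp [mul_neg]

lemma mul_xiThree (c e : Fin 4) : ξ c * xiThree ξ e = -(xiThree ξ e * ξ c) := by
  have h : ∀ b c' d : Fin 4, ξ c * (ξ b * ξ c' * ξ d) = -(ξ b * ξ c' * ξ d * ξ c) := by
    intro b c' d
    rw [mul_assoc (ξ b), swap3 ξ hξξ]
    simp [mul_assoc]
  simp only [xiThree, Finset.mul_sum, mul_smul_comm, Finset.sum_mul, smul_mul_assoc,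
    h, smul_neg, Finset.sum_neg_distrib]

end HKill
section TXi
variable {A : Type*} [Ring A] [Algebra ℝ A] (ξ : Fin 4 → A)
variable (hξξ : ∀ a b, ξ a * ξ b = -(ξ b * ξ a))
include hξξ

lemma K3e (i j : Fin 4) : ξ i * (ξ j * ξ i) = 0 := by
  simpa using K3 ξ hξξ i j 1

lemma K4e (i j k : Fin 4) : ξ i * (ξ j * (ξ k * ξ i)) = 0 := by
  simpa using K4 ξ hξξ i j k 1

lemma xiThree_mul_ne {p d : Fin 4} (h : d ≠ p) : xiThree ξ p * ξ d = 0 := by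
  rw [xiThree, smul_mul_assoc, Finset.sum_mul]
  rw [show (0:A) = ((6:ℝ))⁻¹ • (0:A) by simp]
  congr 1
  apply Finset.sum_eq_zero
  intro b _
  rw [Finset.sum_mul]
  apply Finset.sum_eq_zero
  intro c _
  rw [Finset.sum_mul]
  apply Finset.sum_eq_zero
  intro d' _
  rw [smul_mul_assoc, mul_assoc, mul_assoc]
  by_cases hb : b = d
  · subst hb; rw [K4e ξ hξξ, smul_zero]
  by_cases hc : c = d
  · subst hc; rw [K3e ξ hξξ, mul_zero, smul_zero]
  by_cases hd : d' = d
  · subst hd; rw [xi_sq ξ hξξ, mul_zero, mul_zero, smul_zero]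
  · rw [eps_zero_of_not_inj, zero_smul]
    intro hinj
    obtain ⟨i, hi⟩ := (Finite.injective_iff_surjective.mp hinj) d
    fin_cases i <;> simp_all
end TXi
lemma eps_v0123 : eps (![0,1,2,3] : Fin 4 → Fin 4) = 1 := by
  rw [show (![0,1,2,3] : Fin 4 → Fin 4) = ⇑(⟨![0,1,2,3], ![0,1,2,3], by decide, by decide⟩ : Equiv.Perm (Fin 4)) by decide, eps_apply_perm,
    show Equiv.Perm.sign (⟨![0,1,2,3], ![0,1,2,3], by decide, by decide⟩ : Equiv.Perm (Fin 4)) = 1 by decide]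
  norm_num

lemma eps_v0132 : eps (![0,1,3,2] : Fin 4 → Fin 4) = -1 := by
  rw [show (![0,1,3,2] : Fin 4 → Fin 4) = ⇑(⟨![0,1,3,2], ![0,1,3,2], by decide, by decide⟩ : Equiv.Perm (Fin 4)) by decide, eps_apply_perm,
    show Equiv.Perm.sign (⟨![0,1,3,2], ![0,1,3,2], by decide, by decide⟩ : Equiv.Perm (Fin 4)) = -1 by decide]
  norm_num

lemma eps_v0213 : eps (![0,2,1,3] : Fin 4 → Fin 4) = -1 := by
  rw [show (![0,2,1,3] : Fin 4 → Fin 4) = ⇑(⟨![0,2,1,3], ![0,2,1,3], by decide, by decide⟩ : Equiv.Perm (Fin 4)) by decide, eps_apply_perm,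
    show Equiv.Perm.sign (⟨![0,2,1,3], ![0,2,1,3], by decide, by decide⟩ : Equiv.Perm (Fin 4)) = -1 by decide]
  norm_num

lemma eps_v0231 : eps (![0,2,3,1] : Fin 4 → Fin 4) = 1 := by
  rw [show (![0,2,3,1] : Fin 4 → Fin 4) = ⇑(⟨![0,2,3,1], ![0,3,1,2], by decide, by decide⟩ : Equiv.Perm (Fin 4)) by decide, eps_apply_perm,
    show Equiv.Perm.sign (⟨![0,2,3,1], ![0,3,1,2], by decide, by decide⟩ : Equiv.Perm (Fin 4)) = 1 by decide]
  norm_num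

lemma eps_v0312 : eps (![0,3,1,2] : Fin 4 → Fin 4) = 1 := by
  rw [show (![0,3,1,2] : Fin 4 → Fin 4) = ⇑(⟨![0,3,1,2], ![0,2,3,1], by decide, by decide⟩ : Equiv.Perm (Fin 4)) by decide, eps_apply_perm,
    show Equiv.Perm.sign (⟨![0,3,1,2], ![0,2,3,1], by decide, by decide⟩ : Equiv.Perm (Fin 4)) = 1 by decide]
  norm_num

lemma eps_v0321 : eps (![0,3,2,1] : Fin 4 → Fin 4) = -1 := by
  rw [show (![0,3,2,1] : Fin 4 → Fin 4) = ⇑(⟨![0,3,2,1], ![0,3,2,1], by decide, by decide⟩ : Equiv.Perm (Fin 4)) by decide, eps_apply_perm,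
    show Equiv.Perm.sign (⟨![0,3,2,1], ![0,3,2,1], by decide, by decide⟩ : Equiv.Perm (Fin 4)) = -1 by decide]
  norm_num

lemma eps_v1023 : eps (![1,0,2,3] : Fin 4 → Fin 4) = -1 := by
  rw [show (![1,0,2,3] : Fin 4 → Fin 4) = ⇑(⟨![1,0,2,3], ![1,0,2,3], by decide, by decide⟩ : Equiv.Perm (Fin 4)) by decide, eps_apply_perm,
    show Equiv.Perm.sign (⟨![1,0,2,3], ![1,0,2,3], by decide, by decide⟩ : Equiv.Perm (Fin 4)) = -1 by decide]
  norm_num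

lemma eps_v1032 : eps (![1,0,3,2] : Fin 4 → Fin 4) = 1 := by
  rw [show (![1,0,3,2] : Fin 4 → Fin 4) = ⇑(⟨![1,0,3,2], ![1,0,3,2], by decide, by decide⟩ : Equiv.Perm (Fin 4)) by decide, eps_apply_perm,
    show Equiv.Perm.sign (⟨![1,0,3,2], ![1,0,3,2], by decide, by decide⟩ : Equiv.Perm (Fin 4)) = 1 by decide]
  norm_num

lemma eps_v1203 : eps (![1,2,0,3] : Fin 4 → Fin 4) = 1 := by
  rw [show (![1,2,0,3] : Fin 4 → Fin 4) = ⇑(⟨![1,2,0,3], ![2,0,1,3], by decide, by decide⟩ : Equiv.Perm (Fin 4)) by decide, eps_apply_perm,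
    show Equiv.Perm.sign (⟨![1,2,0,3], ![2,0,1,3], by decide, by decide⟩ : Equiv.Perm (Fin 4)) = 1 by decide]
  norm_num

lemma eps_v1230 : eps (![1,2,3,0] : Fin 4 → Fin 4) = -1 := by
  rw [show (![1,2,3,0] : Fin 4 → Fin 4) = ⇑(⟨![1,2,3,0], ![3,0,1,2], by decide, by decide⟩ : Equiv.Perm (Fin 4)) by decide, eps_apply_perm,
    show Equiv.Perm.sign (⟨![1,2,3,0], ![3,0,1,2], by decide, by decide⟩ : Equiv.Perm (Fin 4)) = -1 by decide]
  norm_num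

lemma eps_v1302 : eps (![1,3,0,2] : Fin 4 → Fin 4) = -1 := by
  rw [show (![1,3,0,2] : Fin 4 → Fin 4) = ⇑(⟨![1,3,0,2], ![2,0,3,1], by decide, by decide⟩ : Equiv.Perm (Fin 4)) by decide, eps_apply_perm,
    show Equiv.Perm.sign (⟨![1,3,0,2], ![2,0,3,1], by decide, by decide⟩ : Equiv.Perm (Fin 4)) = -1 by decide]
  norm_num

lemma eps_v1320 : eps (![1,3,2,0] : Fin 4 → Fin 4) = 1 := by
  rw [show (![1,3,2,0] : Fin 4 → Fin 4) = ⇑(⟨![1,3,2,0], ![3,0,2,1], by decide, by decide⟩ : Equiv.Perm (Fin 4)) by decide, eps_apply_perm,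
    show Equiv.Perm.sign (⟨![1,3,2,0], ![3,0,2,1], by decide, by decide⟩ : Equiv.Perm (Fin 4)) = 1 by decide]
  norm_num

lemma eps_v2013 : eps (![2,0,1,3] : Fin 4 → Fin 4) = 1 := by
  rw [show (![2,0,1,3] : Fin 4 → Fin 4) = ⇑(⟨![2,0,1,3], ![1,2,0,3], by decide, by decide⟩ : Equiv.Perm (Fin 4)) by decide, eps_apply_perm,
    show Equiv.Perm.sign (⟨![2,0,1,3], ![1,2,0,3], by decide, by decide⟩ : Equiv.Perm (Fin 4)) = 1 by decide]
  norm_num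

lemma eps_v2031 : eps (![2,0,3,1] : Fin 4 → Fin 4) = -1 := by
  rw [show (![2,0,3,1] : Fin 4 → Fin 4) = ⇑(⟨![2,0,3,1], ![1,3,0,2], by decide, by decide⟩ : Equiv.Perm (Fin 4)) by decide, eps_apply_perm,
    show Equiv.Perm.sign (⟨![2,0,3,1], ![1,3,0,2], by decide, by decide⟩ : Equiv.Perm (Fin 4)) = -1 by decide]
  norm_num

lemma eps_v2103 : eps (![2,1,0,3] : Fin 4 → Fin 4) = -1 := by
  rw [show (![2,1,0,3] : Fin 4 → Fin 4) = ⇑(⟨![2,1,0,3], ![2,1,0,3], by decide, by decide⟩ : Equiv.Perm (Fin 4)) by decide, eps_apply_perm,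
    show Equiv.Perm.sign (⟨![2,1,0,3], ![2,1,0,3], by decide, by decide⟩ : Equiv.Perm (Fin 4)) = -1 by decide]
  norm_num

lemma eps_v2130 : eps (![2,1,3,0] : Fin 4 → Fin 4) = 1 := by
  rw [show (![2,1,3,0] : Fin 4 → Fin 4) = ⇑(⟨![2,1,3,0], ![3,1,0,2], by decide, by decide⟩ : Equiv.Perm (Fin 4)) by decide, eps_apply_perm,
    show Equiv.Perm.sign (⟨![2,1,3,0], ![3,1,0,2], by decide, by decide⟩ : Equiv.Perm (Fin 4)) = 1 by decide]
  norm_num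

lemma eps_v2301 : eps (![2,3,0,1] : Fin 4 → Fin 4) = 1 := by
  rw [show (![2,3,0,1] : Fin 4 → Fin 4) = ⇑(⟨![2,3,0,1], ![2,3,0,1], by decide, by decide⟩ : Equiv.Perm (Fin 4)) by decide, eps_apply_perm,
    show Equiv.Perm.sign (⟨![2,3,0,1], ![2,3,0,1], by decide, by decide⟩ : Equiv.Perm (Fin 4)) = 1 by decide]
  norm_num

lemma eps_v2310 : eps (![2,3,1,0] : Fin 4 → Fin 4) = -1 := by
  rw [show (![2,3,1,0] : Fin 4 → Fin 4) = ⇑(⟨![2,3,1,0], ![3,2,0,1], by decide, by decide⟩ : Equiv.Perm (Fin 4)) by decide, eps_apply_perm,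
    show Equiv.Perm.sign (⟨![2,3,1,0], ![3,2,0,1], by decide, by decide⟩ : Equiv.Perm (Fin 4)) = -1 by decide]
  norm_num

lemma eps_v3012 : eps (![3,0,1,2] : Fin 4 → Fin 4) = -1 := by
  rw [show (![3,0,1,2] : Fin 4 → Fin 4) = ⇑(⟨![3,0,1,2], ![1,2,3,0], by decide, by decide⟩ : Equiv.Perm (Fin 4)) by decide, eps_apply_perm,
    show Equiv.Perm.sign (⟨![3,0,1,2], ![1,2,3,0], by decide, by decide⟩ : Equiv.Perm (Fin 4)) = -1 by decide]
  norm_num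

lemma eps_v3021 : eps (![3,0,2,1] : Fin 4 → Fin 4) = 1 := by
  rw [show (![3,0,2,1] : Fin 4 → Fin 4) = ⇑(⟨![3,0,2,1], ![1,3,2,0], by decide, by decide⟩ : Equiv.Perm (Fin 4)) by decide, eps_apply_perm,
    show Equiv.Perm.sign (⟨![3,0,2,1], ![1,3,2,0], by decide, by decide⟩ : Equiv.Perm (Fin 4)) = 1 by decide]
  norm_num

lemma eps_v3102 : eps (![3,1,0,2] : Fin 4 → Fin 4) = 1 := by
  rw [show (![3,1,0,2] : Fin 4 → Fin 4) = ⇑(⟨![3,1,0,2], ![2,1,3,0], by decide, by decide⟩ : Equiv.Perm (Fin 4)) by decide, eps_apply_perm,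
    show Equiv.Perm.sign (⟨![3,1,0,2], ![2,1,3,0], by decide, by decide⟩ : Equiv.Perm (Fin 4)) = 1 by decide]
  norm_num

lemma eps_v3120 : eps (![3,1,2,0] : Fin 4 → Fin 4) = -1 := by
  rw [show (![3,1,2,0] : Fin 4 → Fin 4) = ⇑(⟨![3,1,2,0], ![3,1,2,0], by decide, by decide⟩ : Equiv.Perm (Fin 4)) by decide, eps_apply_perm,
    show Equiv.Perm.sign (⟨![3,1,2,0], ![3,1,2,0], by decide, by decide⟩ : Equiv.Perm (Fin 4)) = -1 by decide]
  norm_num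

lemma eps_v3201 : eps (![3,2,0,1] : Fin 4 → Fin 4) = -1 := by
  rw [show (![3,2,0,1] : Fin 4 → Fin 4) = ⇑(⟨![3,2,0,1], ![2,3,1,0], by decide, by decide⟩ : Equiv.Perm (Fin 4)) by decide, eps_apply_perm,
    show Equiv.Perm.sign (⟨![3,2,0,1], ![2,3,1,0], by decide, by decide⟩ : Equiv.Perm (Fin 4)) = -1 by decide]
  norm_num

lemma eps_v3210 : eps (![3,2,1,0] : Fin 4 → Fin 4) = 1 := by
  rw [show (![3,2,1,0] : Fin 4 → Fin 4) = ⇑(⟨![3,2,1,0], ![3,2,1,0], by decide, by decide⟩ : Equiv.Perm (Fin 4)) by decide, eps_apply_perm,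
    show Equiv.Perm.sign (⟨![3,2,1,0], ![3,2,1,0], by decide, by decide⟩ : Equiv.Perm (Fin 4)) = 1 by decide]
  norm_num

section UVal
variable {A : Type*} [Ring A] [Algebra ℝ A] (ξ : Fin 4 → A)
variable (hξξ : ∀ a b, ξ a * ξ b = -(ξ b * ξ a))
include hξξ

lemma u_val (p : Fin 4) : xiThree ξ p * ξ p = -(ξ 0 * (ξ 1 * (ξ 2 * ξ 3))) := by
  have s10 := swap_r ξ hξξ 1 0
  have s20 := swap_r ξ hξξ 2 0
  have s21 := swap_r ξ hξξ 2 1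
  have s30 := swap_r ξ hξξ 3 0
  have s31 := swap_r ξ hξξ 3 1
  have s32 := swap_r ξ hξξ 3 2
  have m10 := hξξ 1 0
  have m20 := hξξ 2 0
  have m21 := hξξ 2 1
  have m30 := hξξ 3 0
  have m31 := hξξ 3 1
  have m32 := hξξ 3 2
  fin_cases p <;>
  · simp only [xiThree, Fin.sum_univ_four, smul_mul_assoc, add_mul, mul_assoc]
    simp [eps_dup, eps_v0123, eps_v0132, eps_v0213, eps_v0231, eps_v0312, eps_v0321, eps_v1023, eps_v1032, eps_v1203, eps_v1230, eps_v1302, eps_v1320, eps_v2013, eps_v2031, eps_v2103, eps_v2130, eps_v2301, eps_v2310, eps_v3012, eps_v3021, eps_v3102, eps_v3120, eps_v3201, eps_v3210, s10, s20, s21, s30, s31, s32, m10, m20, m21, m30, m31, m32]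
    module

lemma Txi_eq (p d : Fin 4) :
    xiThree ξ p * ξ d = if d = p then -(ξ 0 * (ξ 1 * (ξ 2 * ξ 3))) else 0 := by
  by_cases h : d = p
  · subst h; rw [if_pos rfl, u_val ξ hξξ]
  · rw [if_neg h, xiThree_mul_ne ξ hξξ h]
end UVal


section Kill
lemma sum_ite_const {β : Type*} [AddCommMonoid β] (P : Prop) [Decidable P]
    (f : Fin 4 → β) :
    ∑ x : Fin 4, (if P then f x else 0) = if P then ∑ x, f x else 0 := by
  split <;> simp


variable {A : Type*} [Ring A] [Algebra ℝ A] (ξ : Fin 4 → A)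
variable (hξξ : ∀ a b, ξ a * ξ b = -(ξ b * ξ a))
include hξξ

lemma kill (ρ : Fin 4 → Fin 4 → A) {D : A →ₗ[ℝ] A} {s : ℝ} {Cξ : Fin 4 → A}
    {Cρ : Fin 4 → Fin 4 → A}
    (hD : IsCompVF ξ ρ D s Cξ Cρ) (hf : FamSpec ξ s Cξ Cρ) :
    D (xiFour ξ) = 0 ∧ (∀ e, D (xiThree ξ e) = 0) ∧ (∀ e f, D (xiTwo ξ e f) = 0) := by
  obtain ⟨hDξ, -, hL, -⟩ := hD
  rcases hf with ⟨e, hs, hC, -⟩ | ⟨e, f, hs, hC, -⟩ | ⟨e, f, hs, hC, -⟩ |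
    ⟨e, f, g, hs, hC, -⟩ | ⟨e, f, g, h, hs, hC, -⟩
  · -- X⁴ family
    subst hC hs
    refine ⟨?_, fun e' => ?_, fun e' f' => ?_⟩
    · unfold xiFour
      simp [map_smul, map_sum, mul_assoc, hL, hDξ, ite_mul, zero_mul, mul_ite,
        mul_zero, xiFour_mul ξ hξξ, xiFour_mul' ξ hξξ, mul_xiFour ξ hξξ]
    · unfold xiThree
      simp [map_smul, map_sum, mul_assoc, hL, hDξ, ite_mul, zero_mul, mul_ite,
        mul_zero, xiFour_mul ξ hξξ, xiFour_mul' ξ hξξ, mul_xiFour ξ hξξ]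
    · unfold xiTwo
      simp [map_smul, map_sum, mul_assoc, hL, hDξ, ite_mul, zero_mul, mul_ite,
        mul_zero, xiFour_mul ξ hξξ, xiFour_mul' ξ hξξ, mul_xiFour ξ hξξ]
  · -- X³ family
    subst hC hs
    refine ⟨?_, fun e' => ?_, fun e' f' => ?_⟩
    · unfold xiFour
      simp [map_smul, map_sum, mul_assoc, hL, hDξ, add_mul, ite_mul, zero_mul,
        mul_add, mul_ite, mul_zero, mul_neg, xiThree_mul2 ξ hξξ,
        xiThree_mul2' ξ hξξ, mul_xiThree_mul ξ hξξ, mul_xiThree ξ hξξ]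
    · unfold xiThree
      simp [map_smul, map_sum, mul_assoc, hL, hDξ, add_mul, ite_mul, zero_mul,
        mul_add, mul_ite, mul_zero, mul_neg, xiThree_mul2 ξ hξξ,
        xiThree_mul2' ξ hξξ, mul_xiThree_mul ξ hξξ, mul_xiThree ξ hξξ]
    · unfold xiTwo
      simp only [map_smul, map_sum, hL, hDξ, one_smul, add_mul, ite_mul, zero_mul,
        mul_add, mul_ite, mul_zero, mul_xiThree ξ hξξ, Txi_eq ξ hξξ,
        apply_ite (fun x : A => -x), neg_neg, neg_zero, smul_ite, smul_zero,
        smul_neg, smul_add, add_zero, zero_add, Finset.sum_add_distrib,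
        sum_ite_const, Finset.sum_ite_eq', Finset.mem_univ, if_true]
      module
  all_goals
    subst hC hs
    refine ⟨?_, fun e' => ?_, fun e' f' => ?_⟩ <;>
      [unfold xiFour; unfold xiThree; unfold xiTwo] <;>
      simp [map_smul, map_sum, mul_assoc, hL, hDξ]
end Kill

/-- the vector fields `X⁴_a`, `X³_{ab}`, `Y⁴_{ab}`, `Y³_{abc}`,
`Y²_{abcd}` (n = 4) pairwise commute: the graded commutator
`[D₁,D₂] = D₁D₂ - (-1)^{|D₁||D₂|} D₂D₁` of any two of them vanishes
(as a derivation, i.e. on all the generators `ξ^a`, `ρ^{ab}`). -/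
theorem kernel_vector_fields_commute
    (A : Type*) [Ring A] [Algebra ℝ A]
    (ξ : Fin 4 → A) (ρ : Fin 4 → Fin 4 → A)
    (hρa : ∀ a b, ρ a b = - ρ b a)
    (hξξ : ∀ a b, ξ a * ξ b = - (ξ b * ξ a))
    (hξρ : ∀ a b c, ξ a * ρ b c = - (ρ b c * ξ a))
    (hρρ : ∀ a b c d, ρ a b * ρ c d = - (ρ c d * ρ a b))
    (D₁ D₂ : A →ₗ[ℝ] A) (s₁ s₂ : ℝ)
    (Cξ₁ Cξ₂ : Fin 4 → A) (Cρ₁ Cρ₂ : Fin 4 → Fin 4 → A)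
    (h₁ : IsCompVF ξ ρ D₁ s₁ Cξ₁ Cρ₁)
    (h₂ : IsCompVF ξ ρ D₂ s₂ Cξ₂ Cρ₂)
    (hf₁ : FamSpec ξ s₁ Cξ₁ Cρ₁)
    (hf₂ : FamSpec ξ s₂ Cξ₂ Cρ₂) :
    (∀ a, D₁ (D₂ (ξ a))
        - (if s₁ = -1 ∧ s₂ = -1 then (-1 : ℝ) else 1) • D₂ (D₁ (ξ a)) = 0) ∧
    (∀ a b, D₁ (D₂ (ρ a b))
        - (if s₁ = -1 ∧ s₂ = -1 then (-1 : ℝ) else 1) • D₂ (D₁ (ρ a b)) = 0) := by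
  have k₁ := kill ξ hξξ ρ h₁ hf₁
  have k₂ := kill ξ hξξ ρ h₂ hf₂
  have key : ∀ (D : A →ₗ[ℝ] A),
      (D (xiFour ξ) = 0 ∧ (∀ e, D (xiThree ξ e) = 0) ∧
        (∀ e f, D (xiTwo ξ e f) = 0)) →
      ∀ {s : ℝ} {Cξ : Fin 4 → A} {Cρ : Fin 4 → Fin 4 → A}, FamSpec ξ s Cξ Cρ →
        (∀ a, D (Cξ a) = 0) ∧ (∀ a b, D (Cρ a b) = 0) := by
    intro D hk s Cξ Cρ hf
    rcases hf with ⟨e, hs, hC, hCρ⟩ | ⟨e, f, hs, hC, hCρ⟩ | ⟨e, f, hs, hC, hCρ⟩ |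
      ⟨e, f, g, hs, hC, hCρ⟩ | ⟨e, f, g, h, hs, hC, hCρ⟩ <;>
      subst hC <;> subst hCρ <;>
      refine ⟨fun a => ?_, fun a b => ?_⟩ <;>
      simp [dRho, apply_ite (⇑D), hk.1, hk.2.1, hk.2.2]
  obtain ⟨k1ξ, k1ρ⟩ := key D₁ k₁ hf₂
  obtain ⟨k2ξ, k2ρ⟩ := key D₂ k₂ hf₁
  constructor
  · intro a
    rw [h₂.1 a, h₁.1 a, k1ξ a, k2ξ a]
    simp
  · intro a b
    rw [h₂.2.1 a b, h₁.2.1 a b, k1ρ a b, k2ρ a b]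
    simp
end
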